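/- Let N > 1, A ≥ 0, δ > 0, and let y : [t₀, T] → ℝ be differentiable with y(t) > 0 for all t, y(t₀) ≥ δ, and (d/dt)(y(t)^N) ≥ -A·y(t) for all t ∈ [t₀, T]. Then for all t ∈ [t₀, T] with δ^{N-1} - (A(N-1)/N)(t - t₀) > 0, one has y(t) ≥ (δ^{N-1} - (A(N-1)/N)(t - t₀))^{1/(N-1)}. -/

import Mathlib

open Real Set

/- Along a positive solution, `d/dt (y^(N-1)) = (N-1)/(N y) · d/dt (y^N) ≥ -A (N-1)/N`, so
`y^(N-1)` decreases at most linearly with slope `A (N-1)/N` by the mean value theorem; comparing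
with its initial value `≥ δ^(N-1)` and taking `(N-1)`-th roots gives the barrier. -/

theorem deriv_rpow_sub_one_eq {y : ℝ → ℝ} {p s : ℝ} (hy : DifferentiableAt ℝ y s)
    (hys : 0 < y s) (hp : p ≠ 0) :
    deriv (fun u => y u ^ (p - 1)) s = (p - 1) / (p * y s) * deriv (fun u => y u ^ p) s := by
  rw [deriv_rpow_const hy (Or.inl hys.ne'), deriv_rpow_const hy (Or.inl hys.ne'),
    rpow_sub_one hys.ne' (p - 1)]
  field_simp

theorem neg_le_deriv_rpow_sub_one {y : ℝ → ℝ} {N A s : ℝ} (hN : 1 < N)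
    (hy : DifferentiableAt ℝ y s) (hys : 0 < y s)
    (hode : -A * y s ≤ deriv (fun u => y u ^ N) s) :
    -(A * (N - 1) / N) ≤ deriv (fun u => y u ^ (N - 1)) s := by
  have hN0 : 0 < N := by linarith
  have hfactor : 0 ≤ (N - 1) / (N * y s) := div_nonneg (by linarith) (by positivity)
  calc -(A * (N - 1) / N) = (N - 1) / (N * y s) * (-A * y s) := by field_simp
    _ ≤ (N - 1) / (N * y s) * deriv (fun u => y u ^ N) s := mul_le_mul_of_nonneg_left hode hfactor
    _ = deriv (fun u => y u ^ (N - 1)) s := (deriv_rpow_sub_one_eq hy hys hN0.ne').symm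

theorem stmt6_general (N A δ t₀ T : ℝ) (hN : 1 < N) (hδ : 0 < δ)
    (y : ℝ → ℝ)
    (hdiff : ∀ t ∈ Set.Icc t₀ T, DifferentiableAt ℝ y t)
    (hpos : ∀ t ∈ Set.Icc t₀ T, 0 < y t)
    (hinit : δ ≤ y t₀)
    (hode : ∀ t ∈ Set.Icc t₀ T, -A * y t ≤ deriv (fun s => y s ^ N) t) :
    ∀ t ∈ Set.Icc t₀ T, 0 < δ ^ (N - 1) - A * (N - 1) / N * (t - t₀) →
      (δ ^ (N - 1) - A * (N - 1) / N * (t - t₀)) ^ (1 / (N - 1)) ≤ y t := by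
  intro t ht hbase
  have hpow_diff : ∀ s ∈ Icc t₀ T, DifferentiableAt ℝ (fun u => y u ^ (N - 1)) s :=
    fun s hs => (hdiff s hs).rpow_const (Or.inl (hpos s hs).ne')
  have hgrowth : -(A * (N - 1) / N) * (t - t₀) ≤ y t ^ (N - 1) - y t₀ ^ (N - 1) :=
    (convex_Icc t₀ T).mul_sub_le_image_sub_of_le_deriv
      (fun s hs => (hpow_diff s hs).continuousAt.continuousWithinAt)
      (fun s hs => (hpow_diff s (interior_subset hs)).differentiableWithinAt)
      (fun s hs => neg_le_deriv_rpow_sub_one hN (hdiff s (interior_subset hs))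
        (hpos s (interior_subset hs)) (hode s (interior_subset hs)))
      t₀ ⟨le_rfl, ht.1.trans ht.2⟩ t ht ht.1
  have hinit_pow : δ ^ (N - 1) ≤ y t₀ ^ (N - 1) := rpow_le_rpow hδ.le hinit (by linarith)
  rw [one_div, rpow_inv_le_iff_of_pos hbase.le (hpos t ht).le (by linarith)]
  linarith

/-- ODE comparison lower barrier: if `y > 0`, `y(t₀) ≥ δ > 0` and
`(d/dt)(y^N) ≥ -A·y` on `[t₀,T]` with `N > 1`, `A ≥ 0`, then
`y(t) ≥ (δ^{N-1} - (A(N-1)/N)(t-t₀))^{1/(N-1)}` whenever the base is positive. -/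
theorem stmt6 (N A δ t₀ T : ℝ) (hN : 1 < N) (hA : 0 ≤ A) (hδ : 0 < δ)
    (y : ℝ → ℝ)
    (hdiff : ∀ t ∈ Set.Icc t₀ T, DifferentiableAt ℝ y t)
    (hpos : ∀ t ∈ Set.Icc t₀ T, 0 < y t)
    (hinit : δ ≤ y t₀)
    (hode : ∀ t ∈ Set.Icc t₀ T, -A * y t ≤ deriv (fun s => y s ^ N) t) :
    ∀ t ∈ Set.Icc t₀ T, 0 < δ ^ (N - 1) - A * (N - 1) / N * (t - t₀) →
      (δ ^ (N - 1) - A * (N - 1) / N * (t - t₀)) ^ (1 / (N - 1)) ≤ y t :=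
  stmt6_general N A δ t₀ T hN hδ y hdiff hpos hinit hode
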